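/- arXiv:2402.15155 — 3 statements merged into one kernel-verified Lean document; each statement's English description precedes it below -/
import Mathlib

section
/- (Theorem 4.4) Consider the greedy round-robin process for agent i with a normalized monotone submodular objective f and a p-system constraint I, and let S be agent i's final set. Let T = {t_1, …, t_k} be a set of items, indexed in the order in which they are removed from the pool of available items, such that no element of T is removed before agent i's first pick and at most one element of T is removed between any two consecutive turns of agent i. If T ∈ I, then f(S) ≥ f(T) / (p + 2). -/
open Finset

/-- A set function on subsets of a finite ground set is submodular if the marginal value of any
item with respect to a smaller set is at least its marginal value with respect to a larger set. -/
def Submodular {α : Type*} [DecidableEq α] (f : Finset α → ℝ) : Prop :=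
  ∀ ⦃S T : Finset α⦄, S ⊆ T → ∀ ⦃x : α⦄, x ∉ T →
    f (insert x T) - f T ≤ f (insert x S) - f S

/-- `A` is a basis of `S` w.r.t. the independence predicate `Indep`:
a maximal independent subset of `S`. -/
def IsBasisIn {α : Type*} [DecidableEq α] (Indep : Finset α → Prop) (S A : Finset α) : Prop :=
  A ⊆ S ∧ Indep A ∧ ∀ x ∈ S, x ∉ A → ¬ Indep (insert x A)

/-- The agent's solution just before their `r`-th pick: the set of the first `r` picked items. -/
def solAt {α : Type*} [DecidableEq α] (pick : ℕ → α) (r : ℕ) : Finset α :=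
  (Finset.range r).image pick

section Aux
variable {α : Type*} [DecidableEq α]

lemma solAt_zero (pick : ℕ → α) : solAt pick 0 = ∅ := by simp [solAt]

lemma solAt_succ (pick : ℕ → α) (r : ℕ) :
    solAt pick (r + 1) = insert (pick r) (solAt pick r) := by
  simp [solAt, Finset.range_add_one]

lemma solAt_mono (pick : ℕ → α) {r r' : ℕ} (h : r ≤ r') : solAt pick r ⊆ solAt pick r' :=
  Finset.image_subset_image (Finset.range_subset_range.2 h)

lemma exists_basis_containing (Indep : Finset α → Prop) (G : Finset α) :
    ∀ n (U : Finset α), G.card - U.card ≤ n → U ⊆ G → Indep U →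
      ∃ B, U ⊆ B ∧ IsBasisIn Indep G B := by
  intro n
  induction n with
  | zero =>
    intro U hcard hUG hU
    have : U = G := Finset.eq_of_subset_of_card_le hUG (by omega)
    subst this
    exact ⟨U, subset_rfl, subset_rfl, hU, fun x hx hx' => absurd hx hx'⟩
  | succ n IH =>
    intro U hcard hUG hU
    by_cases h : ∃ x ∈ G, x ∉ U ∧ Indep (insert x U)
    · obtain ⟨x, hxG, hxU, hxI⟩ := h
      obtain ⟨B, hB1, hB2⟩ := IH (insert x U)
        (by rw [Finset.card_insert_of_notMem hxU]; omega)
        (Finset.insert_subset hxG hUG) hxI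
      exact ⟨B, (Finset.subset_insert _ _).trans hB1, hB2⟩
    · push_neg at h
      exact ⟨U, subset_rfl, hUG, hU, fun x hx hxU => h x hx hxU⟩

lemma card_le_of_spanning (Indep : Finset α → Prop) (p : ℝ)
    (hPsys : ∀ S A B : Finset α, IsBasisIn Indep S A → IsBasisIn Indep S B →
      (B.card : ℝ) ≤ p * (A.card : ℝ))
    (S U : Finset α) (hS : Indep S) (hU : Indep U)
    (hspan : ∀ x ∈ U, ¬ Indep (insert x S)) :
    (U.card : ℝ) ≤ p * S.card := by
  obtain ⟨B, hUB, hB⟩ := exists_basis_containing Indep (S ∪ U) ((S ∪ U).card - U.card) U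
    le_rfl Finset.subset_union_right hU
  have hSbasis : IsBasisIn Indep (S ∪ U) S := by
    refine ⟨Finset.subset_union_left, hS, fun x hx hxS => ?_⟩
    rcases Finset.mem_union.1 hx with h | h
    · exact absurd h hxS
    · exact hspan x h
  have h1 : (B.card : ℝ) ≤ p * S.card := hPsys (S ∪ U) S B hSbasis hB
  have h2 : (U.card : ℝ) ≤ (B.card : ℝ) := by
    exact_mod_cast Finset.card_le_card hUB
  linarith

lemma sum_weighted_le (M : ℝ) (g a : ℕ → ℝ) (hg0 : ∀ r, 0 ≤ g r)
    (hganti : ∀ i j, i ≤ j → g j ≤ g i) :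
    ∀ n, (∀ m ≤ n, ∑ r ∈ range m, a r ≤ M * m) →
      ∑ r ∈ range n, a r * g r + (M * n - ∑ r ∈ range n, a r) * g n
        ≤ M * ∑ r ∈ range n, g r := by
  intro n
  induction n with
  | zero => simp
  | succ n IH =>
    intro hpre
    have IH' := IH (fun m hm => hpre m (hm.trans (Nat.le_succ n)))
    rw [Finset.sum_range_succ, Finset.sum_range_succ (f := a), Finset.sum_range_succ (f := g)]
    have hcoef : 0 ≤ M * (n + 1 : ℕ) - (∑ r ∈ range n, a r + a n) := by
      have := hpre (n + 1) le_rfl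
      rw [Finset.sum_range_succ] at this
      linarith
    have hgle : g (n + 1) ≤ g n := hganti n (n + 1) (Nat.le_succ n)
    have key : (M * ((n : ℕ) + 1 : ℕ) - (∑ r ∈ range n, a r + a n)) * g (n + 1)
        ≤ (M * ((n : ℕ) + 1 : ℕ) - (∑ r ∈ range n, a r + a n)) * g n :=
      mul_le_mul_of_nonneg_left hgle hcoef
    push_cast at key hcoef ⊢
    nlinarith [hg0 n, hg0 (n + 1)]

lemma f_union_le (f : Finset α → ℝ) (hsub : Submodular f) (S : Finset α) :
    ∀ T : Finset α, f (S ∪ T) - f S ≤ ∑ x ∈ T \ S, (f (insert x S) - f S) := by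
  intro T
  induction T using Finset.induction_on with
  | empty => simp
  | @insert a T haT IH =>
    by_cases haS : a ∈ S
    · rw [Finset.union_insert, Finset.insert_eq_self.2 (Finset.mem_union_left _ haS),
        Finset.insert_sdiff_of_mem _ haS]
      exact IH
    · have haST : a ∉ S ∪ T := by simp [haS, haT]
      rw [Finset.union_insert, Finset.insert_sdiff_of_notMem _ haS,
        Finset.sum_insert (by simp [haS, haT])]
      have h1 := hsub (Finset.subset_union_left (s₁ := S) (s₂ := T)) haST
      linarith

end Aux

/-- Theorem 4.4: consider the greedy round-robin process of agent `i` with a normalized monotone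
submodular objective `f` and a `p`-system constraint `Indep` (turn `r` has availability `avail r`,
at which the agent greedily adds the feasible available item `pick r` of maximum marginal value;
other agents may remove further items between turns; the process ends at a turn at which no
available item can feasibly be added), with final solution `S = solAt pick s`. Let
`T = {t 0, …, t (k−1)}` be a set of distinct items indexed in removal order such that no element
of `T` is removed before agent `i`'s first pick and at most one element of `T` is removed between
any two consecutive turns of agent `i` (hence `t j` is still available at each of the agent's
turns `r ≤ min j s`). If `T` is independent, then `f(S) ≥ f(T) / (p + 2)`. -/
theorem stmt_8 {α : Type*} [DecidableEq α] [Fintype α]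
    (f : Finset α → ℝ) (Indep : Finset α → Prop) (p : ℝ) (hp : 1 ≤ p)
    (hnorm : f ∅ = 0)
    (hmono : ∀ ⦃S T : Finset α⦄, S ⊆ T → f S ≤ f T)
    (hsub : Submodular f)
    (hempty : Indep ∅)
    (hdown : ∀ ⦃X Y : Finset α⦄, X ⊆ Y → Indep Y → Indep X)
    (hPsys : ∀ S A B : Finset α, IsBasisIn Indep S A → IsBasisIn Indep S B →
      (B.card : ℝ) ≤ p * (A.card : ℝ))
    (s : ℕ) (pick : ℕ → α) (avail : ℕ → Finset α)
    (hmem : ∀ r < s, pick r ∈ avail r)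
    (hfeas : ∀ r < s, Indep (insert (pick r) (solAt pick r)))
    (hgreedy : ∀ r < s, ∀ x ∈ avail r, Indep (insert x (solAt pick r)) →
      f (insert x (solAt pick r)) - f (solAt pick r) ≤
        f (insert (pick r) (solAt pick r)) - f (solAt pick r))
    (hrem : ∀ r < s, avail (r + 1) ⊆ (avail r).erase (pick r))
    (hstop : ∀ x ∈ avail s, ¬ Indep (insert x (solAt pick s)))
    (k : ℕ) (t : ℕ → α) (htinj : Set.InjOn t (Set.Iio k))
    (hT : Indep ((Finset.range k).image t))
    (htavail : ∀ j < k, ∀ r : ℕ, r ≤ j → r ≤ s → t j ∈ avail r) :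
    f ((Finset.range k).image t) / (p + 2) ≤ f (solAt pick s) := by
  classical
  have hfS0 : 0 ≤ f (solAt pick s) := by
    have := hmono (Finset.empty_subset (solAt pick s)); linarith
  have hp2 : (0 : ℝ) < p + 2 := by linarith
  rw [div_le_iff₀ hp2]
  rcases Nat.eq_zero_or_pos k with hk | hk
  · subst hk
    simp only [Finset.range_zero, Finset.image_empty, hnorm]
    positivity
  -- basic facts about the greedy process
  have havail_chain : ∀ r r' : ℕ, r' ≤ r → r ≤ s → avail r ⊆ avail r' := by
    intro r
    induction r with
    | zero =>
      intro r' h _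
      have : r' = 0 := by omega
      subst this; exact subset_rfl
    | succ n IH =>
      intro r' h hrs
      rcases Nat.eq_or_lt_of_le h with h' | h'
      · subst h'; exact subset_rfl
      · exact ((hrem n (by omega)).trans (Finset.erase_subset _ _)).trans
          (IH r' (by omega) (by omega))
  have hnotin : ∀ r ≤ s, ∀ x ∈ avail r, x ∉ solAt pick r := by
    intro r hrs x hx hxS
    obtain ⟨r', hr', hpe⟩ := Finset.mem_image.1 hxS
    rw [Finset.mem_range] at hr'
    have h1 : avail r ⊆ avail (r' + 1) := havail_chain r (r' + 1) hr' hrs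
    have h2 := (hrem r' (by omega)) (h1 hx)
    rw [← hpe] at h2
    exact (Finset.mem_erase.1 h2).1 rfl
  have hIndepS : ∀ r ≤ s, Indep (solAt pick r) := by
    intro r hrs
    induction r with
    | zero => rw [solAt_zero]; exact hempty
    | succ n IH =>
      rw [solAt_succ]
      exact hfeas n (by omega)
  have hcardS : ∀ r ≤ s, (solAt pick r).card = r := by
    intro r hrs
    induction r with
    | zero => simp [solAt_zero]
    | succ n IH =>
      rw [solAt_succ, Finset.card_insert_of_notMem
        (hnotin n (by omega) _ (hmem n (by omega))), IH (by omega)]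
  have hs1 : 1 ≤ s := by
    by_contra h
    have hs0 : s = 0 := by omega
    have h0 : t 0 ∈ avail s := htavail 0 hk s (by omega) le_rfl
    refine hstop _ h0 ?_
    rw [hs0, solAt_zero]
    refine hdown ?_ hT
    intro x hx
    rcases Finset.mem_insert.1 hx with h | h
    · subst h; exact Finset.mem_image.2 ⟨0, Finset.mem_range.2 hk, rfl⟩
    · exact absurd h (Finset.notMem_empty x)
  -- the gain sequence
  set g : ℕ → ℝ := fun r =>
    if r < s then f (solAt pick (r + 1)) - f (solAt pick r) else 0 with hgdef
  have hg0 : ∀ r, 0 ≤ g r := by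
    intro r
    simp only [hgdef]
    split
    · have := hmono (solAt_mono pick (Nat.le_succ r)); linarith
    · exact le_rfl
  have hgsum : ∑ r ∈ range s, g r = f (solAt pick s) := by
    have heq : ∑ r ∈ range s, g r
        = ∑ r ∈ range s, (f (solAt pick (r + 1)) - f (solAt pick r)) :=
      Finset.sum_congr rfl (fun r hr => by
        simp only [hgdef, if_pos (Finset.mem_range.1 hr)])
    rw [heq, Finset.sum_range_sub (fun r => f (solAt pick r)) s, solAt_zero, hnorm, sub_zero]
  have hgadj : ∀ r, g (r + 1) ≤ g r := by
    intro r
    by_cases h : r + 1 < s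
    · have h1 : pick (r + 1) ∈ avail r :=
        havail_chain (r + 1) r (Nat.le_succ r) (by omega) (hmem (r + 1) h)
      have h2 : Indep (insert (pick (r + 1)) (solAt pick r)) :=
        hdown (Finset.insert_subset_insert _ (solAt_mono pick (Nat.le_succ r))) (hfeas (r + 1) h)
      have h3 := hgreedy r (by omega) _ h1 h2
      have h4 : pick (r + 1) ∉ solAt pick (r + 1) :=
        hnotin (r + 1) (by omega) _ (hmem (r + 1) h)
      have h5 := hsub (solAt_mono pick (Nat.le_succ r)) h4
      simp only [Nat.succ_eq_add_one] at h5
      rw [solAt_succ pick r] at h5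
      simp only [hgdef, if_pos h, if_pos (by omega : r < s)]
      rw [solAt_succ pick (r + 1), solAt_succ pick r]
      linarith
    · simp only [hgdef, if_neg h]
      exact hg0 r
  have hganti : ∀ i j : ℕ, i ≤ j → g j ≤ g i := by
    intro i j hij
    induction j with
    | zero => simp_all
    | succ n IH =>
      rcases Nat.eq_or_lt_of_le hij with h | h
      · subst h; exact le_rfl
      · exact (hgadj n).trans (IH (by omega))
  set S := solAt pick s with hSdef
  set J : Finset ℕ := (range k).filter (fun j => t j ∉ S) with hJdef
  -- choose a charging of each unpicked item of T to a greedy step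
  have hspec : ∀ j ∈ J, ∃ r, r < s ∧
      (f (insert (t j) S) - f S ≤ g r) ∧
      ∀ n, r < n → (¬ Indep (insert (t j) (solAt pick n)) ∨ j < n) := by
    intro j hj
    rw [hJdef, Finset.mem_filter, Finset.mem_range] at hj
    obtain ⟨hjk, hjS⟩ := hj
    have hTj : Indep {t j} := by
      refine hdown ?_ hT
      exact Finset.singleton_subset_iff.2 (Finset.mem_image.2 ⟨j, Finset.mem_range.2 hjk, rfl⟩)
    by_cases hsp : Indep (insert (t j) S)
    · have hjs : j < s := by
        by_contra h
        exact hstop (t j) (htavail j hjk s (by omega) le_rfl) hsp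
      refine ⟨j, hjs, ?_, fun n hn => Or.inr hn⟩
      have hIndj : Indep (insert (t j) (solAt pick j)) :=
        hdown (Finset.insert_subset_insert _ (solAt_mono pick hjs.le)) hsp
      have hgr := hgreedy j hjs (t j) (htavail j hjk j le_rfl hjs.le) hIndj
      have hsub' := hsub (solAt_mono pick hjs.le) hjS
      simp only [hgdef, if_pos hjs]
      rw [solAt_succ]
      linarith
    · have hex : ∃ m, ¬ Indep (insert (t j) (solAt pick m)) := ⟨s, hsp⟩
      have hm := Nat.find_spec hex
      have hms : Nat.find hex ≤ s := Nat.find_le hsp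
      have hmpos : 0 < Nat.find hex := by
        rcases Nat.eq_zero_or_pos (Nat.find hex) with h0 | h0
        · exfalso
          apply hm
          rw [h0, solAt_zero]
          simpa using hTj
        · exact h0
      have hrs : min j (Nat.find hex - 1) < s := by omega
      have hrm : min j (Nat.find hex - 1) < Nat.find hex := by omega
      have hIr : Indep (insert (t j) (solAt pick (min j (Nat.find hex - 1)))) :=
        not_not.mp (Nat.find_min hex hrm)
      refine ⟨min j (Nat.find hex - 1), hrs, ?_, ?_⟩
      · have hgr := hgreedy (min j (Nat.find hex - 1)) hrs (t j)
          (htavail j hjk (min j (Nat.find hex - 1)) (min_le_left _ _) hrs.le) hIr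
        have hsub' := hsub (solAt_mono pick hrs.le) hjS
        simp only [hgdef, if_pos hrs]
        rw [solAt_succ]
        linarith
      · intro n hrn
        rcases lt_or_ge j n with h | h
        · exact Or.inr h
        · left
          have hmn : Nat.find hex ≤ n := by omega
          intro hIn
          exact hm (hdown (Finset.insert_subset_insert _ (solAt_mono pick hmn)) hIn)
  choose! c hc1 hc3 hc4 using hspec
  -- counting bound
  have hcount : ∀ n ≤ s, ((J.filter fun j => c j < n).card : ℝ) ≤ (p + 1) * n := by
    intro n hns
    set A : Finset ℕ := J.filter (fun j => ¬ Indep (insert (t j) (solAt pick n))) with hAdef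
    have hsubset : J.filter (fun j => c j < n) ⊆ A ∪ range n := by
      intro j hj
      rw [Finset.mem_filter] at hj
      obtain ⟨hjJ, hjc⟩ := hj
      rcases hc4 j hjJ n hjc with h | h
      · exact Finset.mem_union_left _ (Finset.mem_filter.2 ⟨hjJ, h⟩)
      · exact Finset.mem_union_right _ (Finset.mem_range.2 h)
    have hcardA : ((A.card : ℝ)) ≤ p * n := by
      have hAk : ∀ j ∈ A, j < k := by
        intro j hj
        rw [hAdef, Finset.mem_filter, hJdef, Finset.mem_filter, Finset.mem_range] at hj
        exact hj.1.1
      have hinj : Set.InjOn t ↑A := fun x hx y hy hxy =>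
        htinj (hAk x hx) (hAk y hy) hxy
      have hcardU : (A.image t).card = A.card := Finset.card_image_of_injOn hinj
      have hUsub : A.image t ⊆ (range k).image t := by
        apply Finset.image_subset_image
        intro j hj
        exact Finset.mem_range.2 (hAk j hj)
      have hUIndep : Indep (A.image t) := hdown hUsub hT
      have hspan : ∀ x ∈ A.image t, ¬ Indep (insert x (solAt pick n)) := by
        intro x hx
        obtain ⟨j, hj, rfl⟩ := Finset.mem_image.1 hx
        rw [hAdef, Finset.mem_filter] at hj
        exact hj.2
      have := card_le_of_spanning Indep p hPsys (solAt pick n) (A.image t)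
        (hIndepS n hns) hUIndep hspan
      rw [hcardU, hcardS n hns] at this
      exact this
    have h1 : (J.filter (fun j => c j < n)).card ≤ A.card + n := by
      calc (J.filter (fun j => c j < n)).card ≤ (A ∪ range n).card :=
            Finset.card_le_card hsubset
        _ ≤ A.card + (range n).card := Finset.card_union_le _ _
        _ = A.card + n := by rw [Finset.card_range]
    have h1' : ((J.filter (fun j => c j < n)).card : ℝ) ≤ (A.card : ℝ) + n := by
      exact_mod_cast h1
    linarith
  -- fiberwise decomposition
  set a : ℕ → ℝ := fun r => ((J.filter fun j => c j = r).card : ℝ) with hadef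
  have hfiber : ∑ j ∈ J, g (c j) = ∑ r ∈ range s, a r * g r := by
    rw [← Finset.sum_fiberwise_of_maps_to (g := c)
      (fun j hj => Finset.mem_range.2 (hc1 j hj)) (fun j => g (c j))]
    refine Finset.sum_congr rfl (fun r hr => ?_)
    rw [Finset.sum_congr rfl (fun j hj => by
      rw [(Finset.mem_filter.1 hj).2])]
    rw [Finset.sum_const, nsmul_eq_mul, hadef]
  have hprefix : ∀ m ≤ s, ∑ r ∈ range m, a r ≤ (p + 1) * m := by
    intro m hms
    have hdecomp : (J.filter fun j => c j < m).card
        = ∑ r ∈ range m, (J.filter fun j => c j = r).card := by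
      rw [Finset.card_eq_sum_card_fiberwise (f := c) (t := range m)
        (fun j hj => Finset.mem_range.2 (Finset.mem_filter.1 hj).2)]
      refine Finset.sum_congr rfl (fun r hr => ?_)
      congr 1
      rw [Finset.filter_filter]
      refine Finset.filter_congr (fun j hj => ?_)
      rw [Finset.mem_range] at hr
      constructor
      · exact fun h => h.2
      · exact fun h => ⟨by omega, h⟩
    have : ∑ r ∈ range m, a r = ((J.filter fun j => c j < m).card : ℝ) := by
      rw [hdecomp]
      push_cast
      rfl
    rw [this]
    exact hcount m hms
  have hJsum : ∑ j ∈ J, g (c j) ≤ (p + 1) * f (solAt pick s) := by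
    rw [hfiber, ← hgsum]
    have key := sum_weighted_le (p + 1) g a hg0 hganti s hprefix
    have hnn : 0 ≤ ((p + 1) * s - ∑ r ∈ range s, a r) * g s := by
      apply mul_nonneg _ (hg0 s)
      have := hprefix s le_rfl
      linarith
    linarith
  -- assemble
  set T : Finset α := (range k).image t with hTdef
  have himJ : T \ S = J.image t := by
    ext x
    simp only [hTdef, hJdef, Finset.mem_sdiff, Finset.mem_image, Finset.mem_filter,
      Finset.mem_range]
    constructor
    · rintro ⟨⟨j, hj, rfl⟩, hx⟩
      exact ⟨j, ⟨hj, hx⟩, rfl⟩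
    · rintro ⟨j, ⟨hj, hx⟩, rfl⟩
      exact ⟨⟨j, hj, rfl⟩, hx⟩
  have hsum1 : f (S ∪ T) - f S ≤ ∑ j ∈ J, (f (insert (t j) S) - f S) := by
    have := f_union_le f hsub S T
    rw [himJ] at this
    rw [Finset.sum_image (fun x hx y hy hxy =>
      htinj (Finset.mem_range.1 (Finset.mem_filter.1 hx).1)
        (Finset.mem_range.1 (Finset.mem_filter.1 hy).1) hxy)] at this
    exact this
  have hsum2 : ∑ j ∈ J, (f (insert (t j) S) - f S) ≤ ∑ j ∈ J, g (c j) :=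
    Finset.sum_le_sum (fun j hj => hc3 j hj)
  have hfT : f T ≤ f (S ∪ T) := hmono Finset.subset_union_right
  have : f T ≤ f S + (p + 1) * f S := by linarith
  rw [hSdef] at this
  calc f T ≤ f (solAt pick s) + (p + 1) * f (solAt pick s) := this
    _ = f (solAt pick s) * (p + 2) := by ring
end

section
/- (Core of Theorem 6.1, cardinality case) Let f be a normalized monotone submodular function on a finite set M, let OPT = max_{|S| ≤ k, S ⊆ M} f(S) for a cardinality constraint k, and let j_1, …, j_n be items ordered so that f({j_1}) ≥ … ≥ f({j_n}) and f({j_ℓ}) is the ℓ-th largest value of f on singletons (taking value 0 if fewer than ℓ items exist). If v_1, …, v_n are reals satisfying, for every ℓ ∈ {1,…,n}, both v_ℓ ≥ f({j_ℓ}) and v_ℓ ≥ (OPT − Σ_{k'=1}^{ℓ−1} f({j_{k'}})) / n, then (1/n) Σ_{ℓ=1}^{n} v_ℓ ≥ OPT / (2n). -/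
open Finset

/-- `topVal f P ℓ` is the `(ℓ+1)`-st largest value of `f` on singletons `{x}` with `P x`
(so `topVal f P 0` is the largest), taking value `0` if fewer such singletons exist. -/
noncomputable def topVal {α : Type*} [Fintype α] (f : Finset α → ℝ) (P : α → Prop)
    [DecidablePred P] (ℓ : ℕ) : ℝ :=
  ((((Finset.univ.filter P).val.map fun x => f {x}).sort (· ≤ ·)).reverse).getD ℓ 0

lemma topVal_nonneg {α : Type*} [Fintype α] (f : Finset α → ℝ) (P : α → Prop)
    [DecidablePred P] (hf : ∀ x : α, 0 ≤ f {x}) (ℓ : ℕ) : 0 ≤ topVal f P ℓ := by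
  unfold topVal
  set L := ((((Finset.univ.filter P).val.map fun x => f {x}).sort (· ≤ ·)).reverse) with hL
  rw [List.getD_eq_getElem?_getD]
  cases hx : L[ℓ]? with
  | none => simp
  | some a =>
    simp only [Option.getD_some]
    have hmem : a ∈ L := List.mem_of_getElem? hx
    rw [hL, List.mem_reverse] at hmem
    have := (Multiset.mem_sort (· ≤ ·)).1 hmem
    obtain ⟨x, _, hx'⟩ := Multiset.mem_map.1 this
    rw [← hx']; exact hf x

/-- Core of Theorem 6.1 (cardinality case): let `f` be normalized monotone submodular with optimum
value `OPT` over sets of cardinality at most `k`, and let `w ℓ = topVal f (fun _ => True) ℓ` be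
the `(ℓ+1)`-st largest value of `f` on singletons (padded with `0`). If reals `v 0, …, v (n−1)`
satisfy `v ℓ ≥ w ℓ` and `v ℓ ≥ (OPT − ∑_{k'<ℓ} w k') / n` for every `ℓ < n`, then
`(1/n) ∑_{ℓ<n} v ℓ ≥ OPT / (2n)`. -/
theorem stmt_14 {α : Type*} [DecidableEq α] [Fintype α]
    (f : Finset α → ℝ) (k : ℕ) (n : ℕ) (hn : 1 ≤ n)
    (hnorm : f ∅ = 0)
    (hmono : ∀ ⦃S T : Finset α⦄, S ⊆ T → f S ≤ f T)
    (hsub : Submodular f)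
    (OPT : ℝ)
    (hOPTub : ∀ S : Finset α, S.card ≤ k → f S ≤ OPT)
    (hOPTmem : ∃ S : Finset α, S.card ≤ k ∧ f S = OPT)
    (v : ℕ → ℝ)
    (hv : ∀ ℓ < n, topVal f (fun _ : α => True) ℓ ≤ v ℓ ∧
      (OPT - ∑ k' ∈ Finset.range ℓ, topVal f (fun _ : α => True) k') / (n : ℝ) ≤ v ℓ) :
    OPT / (2 * (n : ℝ)) ≤ (∑ ℓ ∈ Finset.range n, v ℓ) / (n : ℝ) := by
  set w := topVal f (fun _ : α => True) with hw
  have hnpos : (0:ℝ) < n := by exact_mod_cast hn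
  have hw0 : ∀ ℓ, 0 ≤ w ℓ := topVal_nonneg f _ (fun x => hnorm ▸ hmono (empty_subset {x}))
  have key : OPT / 2 ≤ ∑ ℓ ∈ Finset.range n, v ℓ := by
    by_cases h : OPT / 2 ≤ ∑ k' ∈ Finset.range n, w k'
    · calc OPT / 2 ≤ ∑ k' ∈ Finset.range n, w k' := h
        _ ≤ ∑ ℓ ∈ Finset.range n, v ℓ :=
          Finset.sum_le_sum fun ℓ hℓ => (hv ℓ (Finset.mem_range.1 hℓ)).1
    · push_neg at h
      have hstep : ∀ ℓ ∈ Finset.range n, OPT / 2 / n ≤ v ℓ := by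
        intro ℓ hℓ
        have hℓn := Finset.mem_range.1 hℓ
        have hpart : ∑ k' ∈ Finset.range ℓ, w k' ≤ ∑ k' ∈ Finset.range n, w k' :=
          Finset.sum_le_sum_of_subset_of_nonneg
            (Finset.range_subset_range.2 hℓn.le) (fun i _ _ => hw0 i)
        have : OPT / 2 ≤ OPT - ∑ k' ∈ Finset.range ℓ, w k' := by linarith
        calc OPT / 2 / n ≤ (OPT - ∑ k' ∈ Finset.range ℓ, w k') / n :=
              div_le_div_of_nonneg_right this hnpos.le
          _ ≤ v ℓ := (hv ℓ hℓn).2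
      calc OPT / 2 = n * (OPT / 2 / n) := by field_simp
        _ = ∑ _ℓ ∈ Finset.range n, (OPT / 2 / n) := by
            rw [Finset.sum_const, Finset.card_range, nsmul_eq_mul]
        _ ≤ ∑ ℓ ∈ Finset.range n, v ℓ := Finset.sum_le_sum hstep
  rw [div_le_div_iff₀ (by linarith) hnpos]
  nlinarith [key]
end

section
/- (Corollary 7.1) Let M be a finite set of goods and let each of n agents i have a normalized monotone submodular valuation v_i : 2^M → ℝ and a p_i-system constraint I_i on M. Then there exists an allocation A = (A_1, …, A_n) of pairwise disjoint sets with A_i ∈ I_i for all i, such that: (1) for every pair of agents i, j with A_j ≠ ∅ there is some g ∈ A_j such that v_i(A_i) ≥ (1/(p_i + 2)) · v_i(A'_j) for every A'_j ⊆ A_j \ {g} with A'_j ∈ I_i (and v_i(A_i) ≥ (1/(p_i + 2)) · v_i(A'_j) for every A'_j ⊆ A_j with A'_j ∈ I_i when A_j = ∅); and (2) for every item g ∈ M \ (A_1 ∪ … ∪ A_n) and every agent i, A_i ∪ {g} ∉ I_i. -/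
/-!
Round robin with greedy picks: agents take turns in the order `0, …, n - 1, 0, …`, and at each
turn an agent adds to its bundle the feasible unallocated item of largest value, if any. After
enough rounds nobody can pick any more, which is (2).

For (1), fix `i ≠ j`, let `g` be `j`'s first pick and `B ⊆ A j \ {g}` independent for `i`. Before
`i`'s `t`-th turn at most `p t` items of `B` are blocked by `i`'s own bundle (which has `t` items
and is a basis of its union with them) and at most `t` have been taken by `j`. Every other item of
`B` is worth at most the greedy gain `δ t` of that turn, and these gains decrease by
submodularity, so summation by parts gives `v B ≤ v (A i) + (p + 1) ∑ δ t = (p + 2) v (A i)`.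
-/

open Finset

section SetFunction

variable {α : Type*} [DecidableEq α]

theorem Submodular.apply_union_le_add_sum {f : Finset α → ℝ} (hf : Submodular f)
    {W T E : Finset α} (hWT : W ⊆ T) (hE : Disjoint E T) :
    f (T ∪ E) ≤ f T + ∑ c ∈ E, (f (insert c W) - f W) := by
  induction E using Finset.induction_on with
  | empty => simp
  | insert c E hc ih =>
    rw [disjoint_insert_left] at hE
    have hcTE : c ∉ T ∪ E := by simp [hE.1, hc]
    have := hf (hWT.trans subset_union_left) hcTE
    rw [union_insert, sum_insert hc]
    linarith [ih hE.2]

theorem sum_range_sub_mul_le_mul_sum {a d : ℕ → ℝ} {L : ℝ} {m : ℕ} (ha0 : a 0 = 0)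
    (ha : ∀ t ≤ m, a t ≤ L * t) (hd : Antitone d) (hd0 : ∀ t, 0 ≤ d t) :
    ∑ t ∈ range m, (a (t + 1) - a t) * d t ≤ L * ∑ t ∈ range m, d t := by
  -- Abel summation; the nonnegative slack `(L k - a k) d k` carries the induction.
  have key : ∀ k ≤ m,
      ∑ t ∈ range k, (a (t + 1) - a t) * d t + (L * k - a k) * d k ≤ L * ∑ t ∈ range k, d t := by
    intro k
    induction k with
    | zero => simp [ha0]
    | succ k ih =>
      intro hk
      have hslack : 0 ≤ L * (k + 1 : ℕ) - a (k + 1) := sub_nonneg.2 (ha _ hk)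
      have hanti := mul_le_mul_of_nonneg_left (hd k.le_succ) hslack
      rw [sum_range_succ, sum_range_succ]
      push_cast at hanti ⊢
      linarith [ih (by omega)]
  linarith [key m le_rfl, mul_nonneg (sub_nonneg.2 (ha m le_rfl)) (hd0 m)]

theorem Submodular.apply_union_le_of_greedy_chain {f : Finset α → ℝ} (hf : Submodular f)
    (hmono : Monotone f) {N P : ℕ → Finset α} {K : ℕ} {L : ℝ} (hN : Monotone N)
    (hδ : Antitone fun t => f (N (t + 1)) - f (N t)) (hP : Monotone P) (hP0 : P 0 = ∅)
    (hPcard : ∀ t ≤ K, ((P t).card : ℝ) ≤ L * t) (hPN : Disjoint (P K) (N K))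
    (hgreedy : ∀ t, ∀ c ∈ P (t + 1) \ P t, f (insert c (N t)) ≤ f (N (t + 1))) :
    f (N K ∪ P K) ≤ f (N K) + L * (f (N K) - f (N 0)) := by
  set δ := fun t => f (N (t + 1)) - f (N t) with hδ_def
  have hchain : ∀ t ≤ K, f (N K ∪ P t) ≤
      f (N K) + ∑ s ∈ range t, (((P (s + 1)).card : ℝ) - (P s).card) * δ s := by
    intro t
    induction t with
    | zero => simp [hP0]
    | succ t ih =>
      intro ht
      have hPt : P t ⊆ P (t + 1) := hP t.le_succ
      have hE : Disjoint (P (t + 1) \ P t) (N K ∪ P t) :=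
        disjoint_union_right.2 ⟨(hPN.mono_left (sdiff_subset.trans (hP ht))), sdiff_disjoint⟩
      have hexpand := hf.apply_union_le_add_sum ((hN (by omega : t ≤ K)).trans subset_union_left) hE
      have hmarginal : ∑ c ∈ P (t + 1) \ P t, (f (insert c (N t)) - f (N t)) ≤
          ((P (t + 1) \ P t).card : ℝ) * δ t := by
        rw [← nsmul_eq_mul]
        exact sum_le_card_nsmul _ _ _ fun c hc => by simp only [hδ_def]; linarith [hgreedy t c hc]
      rw [card_sdiff_of_subset hPt, Nat.cast_sub (card_le_card hPt)] at hmarginal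
      rw [union_assoc, union_sdiff_self_eq_union, union_eq_right.2 hPt] at hexpand
      rw [sum_range_succ]
      linarith [ih (by omega)]
  have hδ0 : ∀ t, 0 ≤ δ t := fun t => sub_nonneg.2 (hmono (hN t.le_succ))
  have habel := sum_range_sub_mul_le_mul_sum (by simp [hP0]) hPcard hδ hδ0
  rw [sum_range_sub (fun t => f (N t))] at habel
  linarith [hchain K le_rfl]

end SetFunction

section PSystem

variable {α : Type*} [DecidableEq α] {Indep : Finset α → Prop}

theorem exists_isBasisIn_superset {S X : Finset α} (hXS : X ⊆ S) (hX : Indep X) :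
    ∃ B, X ⊆ B ∧ IsBasisIn Indep S B := by
  classical
  obtain ⟨B, hB, hmax⟩ := (S.powerset.filter fun B => X ⊆ B ∧ Indep B).exists_max_image card
    ⟨X, by simp [hXS, hX]⟩
  simp only [mem_filter, mem_powerset] at hB
  refine ⟨B, hB.2.1, hB.1, hB.2.2, fun x hxS hxB hind => ?_⟩
  have := hmax (insert x B)
    (by simp [insert_subset hxS hB.1, hB.2.1.trans (subset_insert _ _), hind])
  rw [card_insert_of_notMem hxB] at this
  omega

theorem card_le_mul_card_of_forall_not_indep_insert {p : ℝ}
    (hPsys : ∀ S A B : Finset α, IsBasisIn Indep S A → IsBasisIn Indep S B →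
      (B.card : ℝ) ≤ p * (A.card : ℝ))
    {S C : Finset α} (hS : Indep S) (hC : Indep C)
    (hmax : ∀ c ∈ C, c ∉ S → ¬ Indep (insert c S)) :
    (C.card : ℝ) ≤ p * S.card := by
  obtain ⟨B, hCB, hB⟩ := exists_isBasisIn_superset (subset_union_right : C ⊆ S ∪ C) hC
  have hSbasis : IsBasisIn Indep (S ∪ C) S := by
    refine ⟨subset_union_left, hS, fun x hx hxS => ?_⟩
    rcases mem_union.1 hx with h | h
    exacts [absurd h hxS, hmax x h hxS]
  calc (C.card : ℝ) ≤ B.card := by exact_mod_cast card_le_card hCB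
    _ ≤ p * S.card := hPsys _ _ _ hSbasis hB

end PSystem

section GreedyStep

open Function

variable {α : Type*} [DecidableEq α] [Fintype α] {n : ℕ}
  (v : Fin n → Finset α → ℝ) (Indep : Fin n → Finset α → Prop)

open Classical in
noncomputable def feasiblePicks (A : Fin n → Finset α) (i : Fin n) : Finset α :=
  univ.filter fun g => (∀ j, g ∉ A j) ∧ Indep i (insert g (A i))

variable {Indep} in
@[simp]
theorem mem_feasiblePicks {A : Fin n → Finset α} {i : Fin n} {g : α} :
    g ∈ feasiblePicks Indep A i ↔ (∀ j, g ∉ A j) ∧ Indep i (insert g (A i)) := by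
  simp [feasiblePicks]

variable {Indep} in
theorem feasiblePicks_anti (hdown : ∀ i, ∀ ⦃X Y : Finset α⦄, X ⊆ Y → Indep i Y → Indep i X)
    {A A' : Fin n → Finset α} (h : A ≤ A') (i : Fin n) :
    feasiblePicks Indep A' i ⊆ feasiblePicks Indep A i := by
  intro g hg
  rw [mem_feasiblePicks] at hg ⊢
  exact ⟨fun j hj => hg.1 j (h j hj), hdown i (insert_subset_insert g (h i)) hg.2⟩

noncomputable def greedyStep (i : Fin n) (A : Fin n → Finset α) : Fin n → Finset α :=
  if h : (feasiblePicks Indep A i).Nonempty then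
    update A i
      (insert ((feasiblePicks Indep A i).exists_max_image (fun g => v i (insert g (A i))) h).choose
        (A i))
  else A

variable {v Indep}

theorem greedyStep_of_eq_empty {i : Fin n} {A : Fin n → Finset α}
    (h : feasiblePicks Indep A i = ∅) : greedyStep v Indep i A = A := by
  simp [greedyStep, h]

theorem exists_greedyStep_eq_update {i : Fin n} {A : Fin n → Finset α}
    (h : (feasiblePicks Indep A i).Nonempty) :
    ∃ x ∈ feasiblePicks Indep A i,
      (∀ y ∈ feasiblePicks Indep A i, v i (insert y (A i)) ≤ v i (insert x (A i))) ∧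
      greedyStep v Indep i A = update A i (insert x (A i)) := by
  obtain ⟨hx, hmax⟩ :=
    ((feasiblePicks Indep A i).exists_max_image (fun g => v i (insert g (A i))) h).choose_spec
  exact ⟨_, hx, hmax, dif_pos h⟩

theorem greedyStep_cases (i : Fin n) (A : Fin n → Finset α) :
    greedyStep v Indep i A = A ∨ ∃ x ∈ feasiblePicks Indep A i,
      greedyStep v Indep i A = update A i (insert x (A i)) := by
  rcases (feasiblePicks Indep A i).eq_empty_or_nonempty with h | h
  · exact Or.inl (greedyStep_of_eq_empty h)
  · obtain ⟨x, hx, -, heq⟩ := exists_greedyStep_eq_update (v := v) h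
    exact Or.inr ⟨x, hx, heq⟩

theorem greedyStep_apply_of_ne {i j : Fin n} (A : Fin n → Finset α) (h : j ≠ i) :
    greedyStep v Indep i A j = A j := by
  rcases greedyStep_cases (v := v) (Indep := Indep) i A with heq | ⟨x, -, heq⟩ <;>
    simp [heq, update_of_ne h]

theorem le_greedyStep (i : Fin n) (A : Fin n → Finset α) : A ≤ greedyStep v Indep i A := by
  intro j
  rcases greedyStep_cases (v := v) (Indep := Indep) i A with heq | ⟨x, -, heq⟩
  · rw [heq]
  · rw [heq]
    rcases eq_or_ne j i with rfl | hj
    · simp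
    · simp [update_of_ne hj]

theorem indep_greedyStep {i : Fin n} {A : Fin n → Finset α} (hA : ∀ j, Indep j (A j)) (j : Fin n) :
    Indep j (greedyStep v Indep i A j) := by
  rcases greedyStep_cases (v := v) (Indep := Indep) i A with heq | ⟨x, hx, heq⟩
  · rw [heq]; exact hA j
  · rw [heq]
    rcases eq_or_ne j i with rfl | hj
    · simpa using (mem_feasiblePicks.1 hx).2
    · simpa [update_of_ne hj] using hA j

theorem pairwise_disjoint_greedyStep {i : Fin n} {A : Fin n → Finset α}
    (hA : Pairwise (Disjoint on A)) : Pairwise (Disjoint on greedyStep v Indep i A) := by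
  rcases greedyStep_cases (v := v) (Indep := Indep) i A with heq | ⟨x, hx, heq⟩
  · rwa [heq]
  rw [heq]
  have hfree := (mem_feasiblePicks.1 hx).1
  intro j k hjk
  have hAjk : Disjoint (A j) (A k) := hA hjk
  simp only [onFun]
  by_cases hj : j = i <;> by_cases hk : k = i
  · exact absurd (hj.trans hk.symm) hjk
  · subst hj; simpa [update_of_ne hk, disjoint_insert_left, hfree k] using hAjk
  · subst hk; simpa [update_of_ne hj, disjoint_insert_right, hfree j] using hAjk
  · simpa [update_of_ne hj, update_of_ne hk] using hAjk

end GreedyStep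

section RoundRobin

open Function

variable {α : Type*} [DecidableEq α] [Fintype α] {n : ℕ} [NeZero n]
  (v : Fin n → Finset α → ℝ) (Indep : Fin n → Finset α → Prop)

noncomputable def roundRobin : ℕ → Fin n → Finset α
  | 0 => fun _ => ∅
  | τ + 1 => greedyStep v Indep (Fin.ofNat n τ) (roundRobin τ)

/-- Agent `i`'s bundle just before its `t`-th turn, counting turns from `0`. -/
noncomputable def turnBundle (i : Fin n) (t : ℕ) : Finset α :=
  roundRobin v Indep (i + t * n) i

noncomputable def turnPicks (i : Fin n) (t : ℕ) : Finset α :=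
  feasiblePicks Indep (roundRobin v Indep (i + t * n)) i

noncomputable def roundRobinFinal : Fin n → Finset α :=
  roundRobin v Indep ((Fintype.card α + 1) * n)

variable {v Indep}

theorem roundRobin_mono : Monotone (roundRobin v Indep) :=
  monotone_nat_of_le_succ fun _ => le_greedyStep _ _

theorem indep_roundRobin (hempty : ∀ i, Indep i ∅) (τ : ℕ) (i : Fin n) :
    Indep i (roundRobin v Indep τ i) := by
  induction τ generalizing i with
  | zero => exact hempty i
  | succ τ ih => exact indep_greedyStep ih i

theorem pairwise_disjoint_roundRobin (τ : ℕ) : Pairwise (Disjoint on roundRobin v Indep τ) := by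
  induction τ with
  | zero => intro i j _; simp [roundRobin, onFun]
  | succ τ ih => exact pairwise_disjoint_greedyStep ih

theorem roundRobin_eq_of_forall_ne {i : Fin n} {a b : ℕ} (hab : a ≤ b)
    (h : ∀ τ, a ≤ τ → τ < b → τ % n ≠ i) : roundRobin v Indep b i = roundRobin v Indep a i := by
  induction b, hab using Nat.le_induction with
  | base => rfl
  | succ b hab ih =>
    rw [roundRobin,
      greedyStep_apply_of_ne _ fun hi => h b hab (by omega) (by rw [hi, Fin.val_ofNat]),
      ih fun τ h1 h2 => h τ h1 (by omega)]

theorem roundRobin_apply_eq_empty {τ : ℕ} {i : Fin n} (h : τ ≤ i) :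
    roundRobin v Indep τ i = ∅ := by
  have := i.isLt
  exact roundRobin_eq_of_forall_ne (Nat.zero_le τ) fun τ' _ hτ' => by
    rw [Nat.mod_eq_of_lt (by omega)]; omega

theorem turnBundle_zero (i : Fin n) : turnBundle v Indep i 0 = ∅ :=
  roundRobin_apply_eq_empty (by simp)

theorem turnBundle_succ (i : Fin n) (t : ℕ) :
    turnBundle v Indep i (t + 1) = greedyStep v Indep i (roundRobin v Indep (i + t * n)) i := by
  have hturn : Fin.ofNat n (i + t * n) = i :=
    Fin.ext (by simp [Nat.add_mul_mod_self_right, Nat.mod_eq_of_lt i.isLt])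
  have hn : 0 < n := Nat.pos_of_ne_zero (NeZero.ne n)
  rw [turnBundle, roundRobin_eq_of_forall_ne (a := i + t * n + 1) (by nlinarith), roundRobin, hturn]
  -- a step `τ` strictly between two turns of `i` would have `t < τ / n < t + 1`
  intro τ h1 h2 hτ
  have hdiv := Nat.div_add_mod τ n
  rw [hτ] at hdiv
  have hlo : t < τ / n := Nat.lt_of_mul_lt_mul_left (a := n) (by nlinarith)
  have hhi : τ / n < t + 1 := Nat.lt_of_mul_lt_mul_left (a := n) (by nlinarith)
  omega

theorem mem_turnPicks {i : Fin n} {t : ℕ} {c : α} :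
    c ∈ turnPicks v Indep i t ↔
      (∀ j, c ∉ roundRobin v Indep (i + t * n) j) ∧ Indep i (insert c (turnBundle v Indep i t)) :=
  mem_feasiblePicks

theorem turnBundle_mono (i : Fin n) : Monotone (turnBundle v Indep i) :=
  fun _ _ hst => roundRobin_mono (Nat.add_le_add_left (Nat.mul_le_mul_right n hst) i) i

theorem turnPicks_anti (hdown : ∀ i, ∀ ⦃X Y : Finset α⦄, X ⊆ Y → Indep i Y → Indep i X)
    (i : Fin n) : Antitone (turnPicks v Indep i) :=
  fun _ _ hst => feasiblePicks_anti hdown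
    (roundRobin_mono (Nat.add_le_add_left (Nat.mul_le_mul_right n hst) i)) i

theorem turnBundle_succ_of_eq_empty {i : Fin n} {t : ℕ} (h : turnPicks v Indep i t = ∅) :
    turnBundle v Indep i (t + 1) = turnBundle v Indep i t := by
  rw [turnBundle_succ, greedyStep_of_eq_empty h]
  rfl

theorem exists_turnBundle_succ_eq_insert {i : Fin n} {t : ℕ}
    (h : (turnPicks v Indep i t).Nonempty) :
    ∃ x ∈ turnPicks v Indep i t,
      (∀ y ∈ turnPicks v Indep i t,
        v i (insert y (turnBundle v Indep i t)) ≤ v i (insert x (turnBundle v Indep i t))) ∧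
      turnBundle v Indep i (t + 1) = insert x (turnBundle v Indep i t) := by
  obtain ⟨x, hx, hmax, heq⟩ := exists_greedyStep_eq_update h
  exact ⟨x, hx, hmax, by rw [turnBundle_succ, heq, update_self]; rfl⟩

theorem apply_insert_turnBundle_le {i : Fin n} {t : ℕ} {c : α} (hc : c ∈ turnPicks v Indep i t) :
    v i (insert c (turnBundle v Indep i t)) ≤ v i (turnBundle v Indep i (t + 1)) := by
  obtain ⟨x, -, hmax, heq⟩ := exists_turnBundle_succ_eq_insert ⟨c, hc⟩
  rw [heq]
  exact hmax c hc

theorem notMem_turnBundle_of_mem_turnPicks {i : Fin n} {t : ℕ} {c : α}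
    (hc : c ∈ turnPicks v Indep i t) : c ∉ turnBundle v Indep i t :=
  (mem_turnPicks.1 hc).1 i

theorem card_turnBundle_add_le (i : Fin n) (s t : ℕ) :
    #(turnBundle v Indep i (s + t)) ≤ #(turnBundle v Indep i s) + t := by
  induction t with
  | zero => rfl
  | succ t ih =>
    rw [← add_assoc]
    rcases (turnPicks v Indep i (s + t)).eq_empty_or_nonempty with h | h
    · rw [turnBundle_succ_of_eq_empty h]; omega
    · obtain ⟨x, -, -, heq⟩ := exists_turnBundle_succ_eq_insert h
      rw [heq]
      have := card_insert_le x (turnBundle v Indep i (s + t))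
      omega

theorem card_turnBundle_le (i : Fin n) (t : ℕ) : #(turnBundle v Indep i t) ≤ t := by
  simpa [turnBundle_zero] using card_turnBundle_add_le (v := v) (Indep := Indep) i 0 t

theorem card_turnBundle_of_nonempty {i : Fin n} {t : ℕ}
    (h : ∀ s < t, (turnPicks v Indep i s).Nonempty) : #(turnBundle v Indep i t) = t := by
  induction t with
  | zero => simp [turnBundle_zero]
  | succ t ih =>
    obtain ⟨x, hx, -, heq⟩ := exists_turnBundle_succ_eq_insert (h t t.lt_succ_self)
    rw [heq, card_insert_of_notMem (notMem_turnBundle_of_mem_turnPicks hx),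
      ih fun s hs => h s (hs.trans t.lt_succ_self)]

/-- An agent who could pick at each of its first `|α| + 1` turns would own `|α| + 1` items. -/
theorem turnPicks_card_eq_empty (hdown : ∀ i, ∀ ⦃X Y : Finset α⦄, X ⊆ Y → Indep i Y → Indep i X)
    (i : Fin n) : turnPicks v Indep i (Fintype.card α) = ∅ := by
  by_contra h
  have hcard := card_turnBundle_of_nonempty (t := Fintype.card α + 1) fun s hs =>
    (nonempty_iff_ne_empty.2 h).mono (turnPicks_anti hdown i (by omega))
  have := card_le_univ (turnBundle v Indep i (Fintype.card α + 1))
  omega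

theorem marginal_turnBundle_anti {i : Fin n} (hmono : Monotone (v i)) (hsub : Submodular (v i))
    (hdown : ∀ i, ∀ ⦃X Y : Finset α⦄, X ⊆ Y → Indep i Y → Indep i X) :
    Antitone fun t => v i (turnBundle v Indep i (t + 1)) - v i (turnBundle v Indep i t) := by
  refine antitone_nat_of_succ_le fun t => ?_
  rcases (turnPicks v Indep i (t + 1)).eq_empty_or_nonempty with h | h
  · rw [turnBundle_succ_of_eq_empty h, sub_self]
    exact sub_nonneg.2 (hmono (turnBundle_mono i t.le_succ))
  · obtain ⟨x, hx, -, heq⟩ := exists_turnBundle_succ_eq_insert h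
    -- `x` could already be picked at turn `t`, where the greedy choice was at least as good
    have hprev := apply_insert_turnBundle_le (turnPicks_anti hdown i t.le_succ hx)
    have := hsub (turnBundle_mono i t.le_succ) (notMem_turnBundle_of_mem_turnPicks hx)
    simp only [heq]
    linarith

theorem turnBundle_subset_roundRobinFinal {i : Fin n} {t : ℕ} (ht : t ≤ Fintype.card α) :
    turnBundle v Indep i t ⊆ roundRobinFinal v Indep i :=
  roundRobin_mono (by have := i.isLt; nlinarith) i

theorem feasiblePicks_roundRobinFinal
    (hdown : ∀ i, ∀ ⦃X Y : Finset α⦄, X ⊆ Y → Indep i Y → Indep i X) (i : Fin n) :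
    feasiblePicks Indep (roundRobinFinal v Indep) i = ∅ :=
  subset_empty.1 <|
    (feasiblePicks_anti hdown (roundRobin_mono (by have := i.isLt; nlinarith)) i).trans
      (turnPicks_card_eq_empty hdown i).subset

theorem notMem_roundRobin_of_mem_roundRobinFinal {c : α} {j j' : Fin n} {τ : ℕ}
    (hc : c ∈ roundRobinFinal v Indep j) (hτ : τ ≤ (Fintype.card α + 1) * n) (hj : j' ≠ j) :
    c ∉ roundRobin v Indep τ j' :=
  fun hc' => disjoint_left.1 (pairwise_disjoint_roundRobin _ hj) (roundRobin_mono hτ j' hc') hc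

theorem exists_mem_roundRobinFinal_turnBundle_one_subset {j : Fin n}
    (hne : (roundRobinFinal v Indep j).Nonempty) :
    ∃ g ∈ roundRobinFinal v Indep j, turnBundle v Indep j 1 ⊆ {g} := by
  rcases (turnBundle v Indep j 1).eq_empty_or_nonempty with h | ⟨g, hg⟩
  · obtain ⟨g, hg⟩ := hne
    exact ⟨g, hg, h ▸ empty_subset _⟩
  have hcard := card_turnBundle_le (v := v) (Indep := Indep) j 1
  refine ⟨g, turnBundle_subset_roundRobinFinal (Fintype.card_pos_iff.2 ⟨g⟩) hg,
    fun x hx => mem_singleton.2 (card_le_one.1 hcard x hx g hg)⟩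

/-- An item of `B` that `i` cannot pick at its `t`-th turn is blocked by `i`'s bundle (at most
`p t` such items, by the `p`-system property) or taken by `j` (at most `t` besides `g`). -/
theorem card_sdiff_turnPicks_le {p : ℝ} {i j : Fin n} {g : α} {B : Finset α} {t : ℕ} (hp : 0 ≤ p)
    (hPsys : ∀ S A B : Finset α, IsBasisIn (Indep i) S A → IsBasisIn (Indep i) S B →
      (B.card : ℝ) ≤ p * (A.card : ℝ))
    (hempty : ∀ i, Indep i ∅) (hdown : ∀ i, ∀ ⦃X Y : Finset α⦄, X ⊆ Y → Indep i Y → Indep i X)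
    (hij : i ≠ j) (hg : turnBundle v Indep j 1 ⊆ {g})
    (hB : B ⊆ (roundRobinFinal v Indep j).erase g) (hBi : Indep i B) (ht : t ≤ Fintype.card α) :
    (#(B \ turnPicks v Indep i t) : ℝ) ≤ (p + 1) * t := by
  classical
  set C := B.filter fun c => ¬ Indep i (insert c (turnBundle v Indep i t))
  set D := turnBundle v Indep j (1 + t) \ turnBundle v Indep j 1
  have hsplit : B \ turnPicks v Indep i t ⊆ C ∪ D := by
    intro c hc
    obtain ⟨hcB, hcF⟩ := mem_sdiff.1 hc
    obtain ⟨hcj, hcg⟩ := mem_erase.1 (hB hcB) |>.symm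
    by_cases hind : Indep i (insert c (turnBundle v Indep i t))
    · obtain ⟨j', hj'⟩ : ∃ j', c ∈ roundRobin v Indep (i + t * n) j' := by
        by_contra! hfree
        exact hcF (mem_turnPicks.2 ⟨hfree, hind⟩)
      obtain rfl : j' = j := by
        by_contra hj
        exact notMem_roundRobin_of_mem_roundRobinFinal hcj (by have := i.isLt; nlinarith) hj hj'
      refine mem_union_right _ (mem_sdiff.2 ⟨roundRobin_mono ?_ j' hj', fun h1 => hcg ?_⟩)
      · have := i.isLt; nlinarith
      · simpa using hg h1
    · exact mem_union_left _ (mem_filter.2 ⟨hcB, hind⟩)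
  have hC : (#C : ℝ) ≤ p * t := by
    have hCS : (#C : ℝ) ≤ p * #(turnBundle v Indep i t) :=
      card_le_mul_card_of_forall_not_indep_insert hPsys (indep_roundRobin hempty _ i)
      (hdown i (filter_subset _ _) hBi) fun c hc _ => (mem_filter.1 hc).2
    have hS : (#(turnBundle v Indep i t) : ℝ) ≤ t := by exact_mod_cast card_turnBundle_le i t
    nlinarith
  have hD : (#D : ℝ) ≤ t := by
    have h1 := card_turnBundle_add_le (v := v) (Indep := Indep) j 1 t
    have h2 := card_le_card (turnBundle_mono (v := v) (Indep := Indep) j (by omega : 1 ≤ 1 + t))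
    rw [card_sdiff_of_subset (turnBundle_mono j (by omega))]
    exact_mod_cast (by omega : _ ≤ t)
  calc (#(B \ turnPicks v Indep i t) : ℝ) ≤ #(C ∪ D) := by exact_mod_cast card_le_card hsplit
    _ ≤ #C + #D := by exact_mod_cast card_union_le C D
    _ ≤ (p + 1) * t := by linarith

theorem apply_le_mul_apply_roundRobinFinal {p : ℝ} {i j : Fin n} {g : α} {B : Finset α}
    (hp : 0 ≤ p) (hnorm : v i ∅ = 0) (hmono : Monotone (v i)) (hsub : Submodular (v i))
    (hempty : ∀ i, Indep i ∅) (hdown : ∀ i, ∀ ⦃X Y : Finset α⦄, X ⊆ Y → Indep i Y → Indep i X)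
    (hPsys : ∀ S A B : Finset α, IsBasisIn (Indep i) S A → IsBasisIn (Indep i) S B →
      (B.card : ℝ) ≤ p * (A.card : ℝ))
    (hij : i ≠ j) (hg : turnBundle v Indep j 1 ⊆ {g})
    (hB : B ⊆ (roundRobinFinal v Indep j).erase g) (hBi : Indep i B) :
    v i B ≤ (p + 2) * v i (roundRobinFinal v Indep i) := by
  have hPK : B \ turnPicks v Indep i (Fintype.card α) = B := by
    simp [turnPicks_card_eq_empty hdown i]
  have hP0 : B \ turnPicks v Indep i 0 = ∅ := by
    refine sdiff_eq_empty_iff_subset.2 fun c hc => mem_turnPicks.2 ⟨fun j' hc' => ?_, ?_⟩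
    · obtain ⟨hcg, hcj⟩ := mem_erase.1 (hB hc)
      rcases eq_or_ne j' j with rfl | hj'
      · exact hcg (mem_singleton.1 (hg (roundRobin_mono (by simp; omega) j' hc')))
      · have := i.isLt
        exact notMem_roundRobin_of_mem_roundRobinFinal hcj (by simp; nlinarith) hj' hc'
    · simpa [turnBundle_zero] using hdown i (singleton_subset_iff.2 hc) hBi
  have hchain := hsub.apply_union_le_of_greedy_chain (K := Fintype.card α)
    (P := fun t => B \ turnPicks v Indep i t) hmono (turnBundle_mono i)
    (marginal_turnBundle_anti hmono hsub hdown)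
    (fun _ _ hst => sdiff_subset_sdiff subset_rfl (turnPicks_anti hdown i hst)) hP0
    (fun t ht => card_sdiff_turnPicks_le hp hPsys hempty hdown hij hg hB hBi ht)
    (by
      rw [hPK]
      exact (pairwise_disjoint_roundRobin _ hij.symm).mono (hB.trans (erase_subset _ _))
        (turnBundle_subset_roundRobinFinal le_rfl))
    fun t c hc => apply_insert_turnBundle_le <| by
      obtain ⟨⟨hcB, -⟩, hct⟩ := mem_sdiff.1 hc |>.imp_left mem_sdiff.1
      by_contra h
      exact hct (mem_sdiff.2 ⟨hcB, h⟩)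
  rw [hPK, turnBundle_zero, hnorm] at hchain
  calc v i B ≤ v i (turnBundle v Indep i (Fintype.card α) ∪ B) := hmono subset_union_right
    _ ≤ (p + 2) * v i (turnBundle v Indep i (Fintype.card α)) := by linarith
    _ ≤ (p + 2) * v i (roundRobinFinal v Indep i) :=
      mul_le_mul_of_nonneg_left (hmono (turnBundle_subset_roundRobinFinal le_rfl)) (by linarith)

end RoundRobin

/-- Corollary 7.1: for `n` agents with normalized monotone submodular valuations `v i` and
`p i`-system constraints `Indep i` over a finite set of goods, there exists an allocation
`A 0, …, A (n−1)` of pairwise disjoint feasible sets such that (1) for every pair of agents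
`i, j`: if `A j` is nonempty there is some `g ∈ A j` with
`v i (A i) ≥ (1/(p i + 2)) · v i B` for every feasible `B ⊆ A j \ {g}`, and if `A j = ∅` then
`v i (A i) ≥ (1/(p i + 2)) · v i B` for every feasible `B ⊆ A j`; and (2) adding any unallocated
good to any agent's set is infeasible. -/
theorem stmt_18 {α : Type*} [DecidableEq α] [Fintype α] (n : ℕ)
    (v : Fin n → Finset α → ℝ) (Indep : Fin n → Finset α → Prop) (p : Fin n → ℝ)
    (hp : ∀ i, 1 ≤ p i)
    (hnorm : ∀ i, v i ∅ = 0)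
    (hmono : ∀ i, ∀ ⦃S T : Finset α⦄, S ⊆ T → v i S ≤ v i T)
    (hsub : ∀ i, Submodular (v i))
    (hempty : ∀ i, Indep i ∅)
    (hdown : ∀ i, ∀ ⦃X Y : Finset α⦄, X ⊆ Y → Indep i Y → Indep i X)
    (hPsys : ∀ i, ∀ S A B : Finset α, IsBasisIn (Indep i) S A → IsBasisIn (Indep i) S B →
      (B.card : ℝ) ≤ p i * (A.card : ℝ)) :
    ∃ A : Fin n → Finset α,
      (∀ i j, i ≠ j → Disjoint (A i) (A j)) ∧
      (∀ i, Indep i (A i)) ∧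
      (∀ i j : Fin n,
        ((A j).Nonempty → ∃ g ∈ A j, ∀ B ⊆ (A j).erase g, Indep i B →
          (1 / (p i + 2)) * v i B ≤ v i (A i)) ∧
        (A j = ∅ → ∀ B ⊆ A j, Indep i B → (1 / (p i + 2)) * v i B ≤ v i (A i))) ∧
      (∀ g : α, (∀ i, g ∉ A i) → ∀ i, ¬ Indep i (insert g (A i))) := by
  rcases Nat.eq_zero_or_pos n with rfl | hn
  · exact ⟨fun _ => ∅, fun i => i.elim0, fun i => i.elim0, fun i => i.elim0, fun _ _ i => i.elim0⟩
  have : NeZero n := ⟨hn.ne'⟩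
  set A := roundRobinFinal v Indep
  have hscale : ∀ i B, v i B ≤ (p i + 2) * v i (A i) → 1 / (p i + 2) * v i B ≤ v i (A i) :=
    fun i B h => by rwa [one_div, inv_mul_le_iff₀ (by linarith [hp i])]
  have hle_self : ∀ i B, B ⊆ A i → v i B ≤ (p i + 2) * v i (A i) := fun i B hB => by
    have := hmono i (empty_subset (A i))
    nlinarith [hmono i hB, hnorm i, hp i]
  refine ⟨A, fun i j hij => pairwise_disjoint_roundRobin _ hij, indep_roundRobin hempty _,
    fun i j => ⟨fun hne => ?_, fun hAj B hB _ =>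
      hscale i B (hle_self i B (subset_empty.1 (hAj ▸ hB) ▸ empty_subset _))⟩,
    fun g hg i hind => ?_⟩
  · rcases eq_or_ne i j with rfl | hij
    · obtain ⟨g, hg⟩ := hne
      exact ⟨g, hg, fun B hB _ => hscale i B (hle_self i B (hB.trans (erase_subset _ _)))⟩
    · obtain ⟨g, hg, hg1⟩ := exists_mem_roundRobinFinal_turnBundle_one_subset hne
      exact ⟨g, hg, fun B hB hBi => hscale i B <| apply_le_mul_apply_roundRobinFinal
        (by linarith [hp i]) (hnorm i) (hmono i) (hsub i) hempty hdown (hPsys i) hij hg1 hB hBi⟩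
  · have : g ∈ feasiblePicks Indep A i := mem_feasiblePicks.2 ⟨hg, hind⟩
    simp [A, feasiblePicks_roundRobinFinal hdown] at this
end
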